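/- For every fixed z ∈ 𝔻 \ {0}, the function t ↦ K_t(z) (where K_t(z) ∈ 𝔻 \ {0} is the unique point with (K_t(z)+1)²/K_t(z) = e^{t/2}(z+1)²/z) is differentiable on [0,∞) and satisfies the differential equation 2·(d/dt)K_t(z) = −K_t(z)·(1+K_t(z))/(1−K_t(z)) with initial condition K_0(z) = z. -/

import Mathlib

/-!
On the punctured disk, `φ u = φ v` forces `(u - v)(uv - 1) = 0`, so `φ` is injective there, and
`φ' a = (a² - 1)/a²` does not vanish. Hence near `K t` the map `φ` has a holomorphic local inverse
`ψ`, and injectivity forces `K s = ψ (e^{s/2} φ z)` for `s ≥ 0` near `t`; the chain rule gives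
`K' = φ(K)/(2 φ'(K)) = -K(1+K)/(2(1-K))`. At `t = 0` injectivity gives `K 0 = z`.
-/

open Filter Topology

theorem HasStrictDerivAt.hasDerivWithinAt_of_comp_eventuallyEq
    {𝕜 𝕜' : Type*} [NontriviallyNormedField 𝕜] [NontriviallyNormedField 𝕜'] [CompleteSpace 𝕜']
    [NormedAlgebra 𝕜 𝕜'] {f : 𝕜' → 𝕜'} {f' : 𝕜'} {K g : 𝕜 → 𝕜'} {g' : 𝕜'} {U : Set 𝕜'}
    {S : Set 𝕜} {t : 𝕜} (hf : HasStrictDerivAt f f' (K t)) (hf' : f' ≠ 0) (hU : U ∈ 𝓝 (K t))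
    (hinj : U.InjOn f) (hg : HasDerivAt g g' t) (ht : t ∈ S)
    (hKg : ∀ᶠ s in 𝓝[S] t, K s ∈ U ∧ f (K s) = g s) :
    HasDerivWithinAt K (f'⁻¹ * g') S t := by
  set ψ := hf.localInverse f f' (K t) hf'
  have hgt : g t = f (K t) := (hKg.self_of_nhdsWithin ht).2.symm
  have hψ : HasDerivAt (ψ ∘ g) (f'⁻¹ * g') t := by
    have := (hf.to_localInverse hf').hasDerivAt
    rw [← hgt] at this
    exact this.comp t hg
  have hψgt : ψ (g t) = K t := hgt ▸ (hf.eventually_left_inverse hf').self_of_nhds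
  have hg_tendsto : Tendsto g (𝓝 t) (𝓝 (f (K t))) := hgt ▸ hg.continuousAt.tendsto
  have hψU : ∀ᶠ s in 𝓝 t, ψ (g s) ∈ U :=
    hψ.continuousAt.eventually_mem (by rwa [Function.comp_apply, hψgt])
  have hfψ : ∀ᶠ s in 𝓝 t, f (ψ (g s)) = g s :=
    hg_tendsto.eventually (hf.eventually_right_inverse hf')
  have hKψ : K =ᶠ[𝓝[S] t] ψ ∘ g := by
    filter_upwards [hKg, nhdsWithin_le_nhds hψU, nhdsWithin_le_nhds hfψ] with s hKs hψs hfψs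
    exact hinj hKs.1 hψs (hKs.2.trans hfψs.symm)
  exact hψ.hasDerivWithinAt.congr_of_eventuallyEq hKψ hψgt.symm

noncomputable def phi (w : ℂ) : ℂ := (w + 1) ^ 2 / w

lemma phi_injOn_ball_diff_zero : (Metric.ball (0 : ℂ) 1 \ {0}).InjOn phi := by
  rintro u ⟨hu, hu0⟩ v ⟨hv, hv0⟩ h
  rw [mem_ball_zero_iff] at hu hv
  rw [Set.mem_singleton_iff] at hu0 hv0
  have huv : u * v ≠ 1 := by
    intro huv
    have : ‖u * v‖ < 1 := by
      rw [norm_mul]; exact mul_lt_one_of_nonneg_of_lt_one_left (norm_nonneg u) hu hv.le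
    simp [huv] at this
  have hfac : (u - v) * (u * v - 1) = 0 := by
    unfold phi at h
    field_simp at h
    linear_combination h
  exact sub_eq_zero.mp ((mul_eq_zero.mp hfac).resolve_right (sub_ne_zero.mpr huv))

lemma hasStrictDerivAt_phi {a : ℂ} (ha : a ≠ 0) : HasStrictDerivAt phi ((a ^ 2 - 1) / a ^ 2) a := by
  have h := (((hasStrictDerivAt_id a).add_const 1).fun_pow 2).fun_div (hasStrictDerivAt_id a) ha
  exact h.congr_deriv (by simp only [id]; ring)

lemma pow_ne_one_of_norm_lt_one {𝕜 : Type*} [NormedDivisionRing 𝕜] {a : 𝕜} (ha : ‖a‖ < 1)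
    {n : ℕ} (hn : n ≠ 0) : a ^ n ≠ 1 := by
  intro h
  have : ‖a‖ ^ n < 1 := pow_lt_one₀ (norm_nonneg a) ha hn
  rw [← norm_pow, h, norm_one] at this
  exact lt_irrefl 1 this

lemma inv_deriv_phi_mul_phi {a : ℂ} (ha : a ≠ 0) (ha2 : a ^ 2 ≠ 1) :
    ((a ^ 2 - 1) / a ^ 2)⁻¹ * phi a = -(a * (1 + a) / (1 - a)) := by
  have h1 : 1 - a ≠ 0 := fun h => ha2 (by rw [← sub_eq_zero.mp h]; ring)
  have h2 : a ^ 2 - 1 ≠ 0 := sub_ne_zero.mpr ha2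
  unfold phi
  field_simp
  ring

lemma hasDerivAt_cexp_div_two_mul (c : ℂ) (t : ℝ) :
    HasDerivAt (fun s : ℝ => Complex.exp (s / 2) * c) (Complex.exp (t / 2) * c / 2) t := by
  have h := ((Complex.ofRealCLM.hasDerivAt (x := t)).div_const 2).cexp.mul_const c
  exact h.congr_deriv (by simp only [Complex.ofRealCLM_apply, Complex.ofReal_one]; ring)

/-- For fixed `z ∈ 𝔻 \ {0}`, the function `t ↦ K_t(z)` (the unique point of `𝔻 \ {0}`
with `(K_t(z)+1)²/K_t(z) = e^{t/2}(z+1)²/z`) is differentiable on `[0,∞)` and satisfies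
`2 (d/dt) K_t(z) = -K_t(z)(1+K_t(z))/(1-K_t(z))`, with `K_0(z) = z`. -/
theorem stmt_2 (z : ℂ) (hz : ‖z‖ < 1) (hz0 : z ≠ 0)
    (K : ℝ → ℂ)
    (hK : ∀ t : ℝ, 0 ≤ t → (‖K t‖ < 1 ∧ K t ≠ 0) ∧
      (K t + 1) ^ 2 / K t = Complex.exp (t / 2) * (z + 1) ^ 2 / z) :
    (∀ t : ℝ, 0 ≤ t →
      HasDerivWithinAt K (-(K t * (1 + K t) / (1 - K t)) / 2) (Set.Ici (0 : ℝ)) t) ∧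
    K 0 = z := by
  have hKU : ∀ t ∈ Set.Ici (0 : ℝ), K t ∈ Metric.ball 0 1 \ {0} ∧
      phi (K t) = Complex.exp (t / 2) * phi z := fun t ht =>
    ⟨⟨mem_ball_zero_iff.mpr (hK t ht).1.1, (hK t ht).1.2⟩, by rw [phi, phi, (hK t ht).2, mul_div_assoc]⟩
  refine ⟨fun t ht => ?_, ?_⟩
  · obtain ⟨⟨hKt, hKt0⟩, hφ⟩ := hKU t ht
    have hKt2 := pow_ne_one_of_norm_lt_one (mem_ball_zero_iff.mp hKt) two_ne_zero
    have := (hasStrictDerivAt_phi hKt0).hasDerivWithinAt_of_comp_eventuallyEq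
      (div_ne_zero (sub_ne_zero.mpr hKt2) (pow_ne_zero 2 hKt0))
      ((Metric.isOpen_ball.sdiff isClosed_singleton).mem_nhds ⟨hKt, hKt0⟩)
      phi_injOn_ball_diff_zero (hasDerivAt_cexp_div_two_mul (phi z) t) ht
      (eventually_nhdsWithin_of_forall hKU)
    rwa [← hφ, mul_div_assoc', inv_deriv_phi_mul_phi hKt0 hKt2] at this
  · obtain ⟨hK0, hφ0⟩ := hKU 0 Set.self_mem_Ici
    exact phi_injOn_ball_diff_zero hK0 ⟨mem_ball_zero_iff.mpr hz, hz0⟩ (by simpa using hφ0)
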